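/- arXiv:1808.08074 — 6 statements merged into one kernel-verified Lean document; each statement's English description precedes it below -/
import Mathlib

section
/- For the Schur polynomial $s_\lambda(w_1,\dots,w_{\kappa+1})$ in $\kappa+1$ variables and rectangular partitions, the Plücker-type identity holds: $s_{(i^a,1)} \cdot s_{((i-1)^a)} - s_{((i-1)^a,1)} \cdot s_{(i^a)} = s_{((i-1)^{a-1})} \cdot s_{(i^{a+1})}$, for all integers $i \ge 1$ and $1 \le a \le \kappa$, where $(c^a)$ denotes the partition with $a$ parts equal to $c$ and $(c^a,1)$ the partition $(c,\dots,c,1)$. -/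
/-!
All six numerators are alternants `det (w_r ^ e_j)` whose exponent sequences agree outside two
slots. With `A = i + κ`, `B = i + κ - a`, `C = κ - a + 1`, `D = κ - a`, the partitions
`(i^a,1)`, `(i^a)`, `(i^(a+1))` put `AC`, `AD`, `AB` into slots `0, a`, and `((i-1)^a)`,
`((i-1)^a,1)`, `((i-1)^(a-1))` put `BD`, `BC`, `CD` into slots `a-1, a`, which a cyclic shift of
the first `a` columns moves to slots `0, a`. With the other `κ - 1` columns fixed, the alternant is
an alternating bilinear form `[u v]` in the two free columns, and the identity is the three-term
Plücker relation `[AB][CD] - [AC][BD] + [AD][BC] = 0`. That relation holds because `A, B, C` and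
the fixed columns are `κ + 2` vectors in dimension `κ + 1`: either the linear dependence involves
`A, B, C`, so a nontrivial combination of them pairs to zero with everything, or it involves only
the fixed columns, and then every bracket vanishes.
-/

/-- Schur polynomial as ratio of determinants in `κ+1` variables. -/
noncomputable def schur (κ : ℕ) (lam : Fin (κ+1) → ℕ) (w : Fin (κ+1) → ℝ) : ℝ :=
  (Matrix.det (Matrix.of fun i j : Fin (κ+1) => w i ^ (lam j + (κ - (j:ℕ))))) /
  (Matrix.det (Matrix.of fun i j : Fin (κ+1) => w i ^ (κ - (j:ℕ))))

/-- The rectangular partition `(c^a)`, padded with zeros. -/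
def rect (κ c a : ℕ) : Fin (κ+1) → ℕ := fun j => if (j:ℕ) < a then c else 0

/-- The partition `(c^a, 1)`, padded with zeros. -/
def rectOne (κ c a : ℕ) : Fin (κ+1) → ℕ :=
  fun j => if (j:ℕ) < a then c else if (j:ℕ) = a then 1 else 0

open Function

theorem plucker_of_left_relation {K V : Type*} [Field K] (ω : V → V → K)
    (hself : ∀ u, ω u u = 0) (hswap : ∀ u v, ω v u = -ω u v) {α β γ : K}
    (hne : ¬(α = 0 ∧ β = 0 ∧ γ = 0)) {A B C : V}
    (hrel : ∀ v, α * ω A v + β * ω B v + γ * ω C v = 0) (D : V) :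
    ω A B * ω C D - ω A C * ω B D + ω A D * ω B C = 0 := by
  have hA := hrel A
  have hB := hrel B
  have hC := hrel C
  have hD := hrel D
  rw [hself] at hA hB hC
  rw [hswap A B, hswap A C, hswap B C] at *
  by_contra hP
  refine hne ⟨?_, ?_, ?_⟩
  · refine (mul_eq_zero.mp (?_ : α * _ = 0)).resolve_right hP
    linear_combination ω C D * hB - ω B D * hC + ω B C * hD
  · refine (mul_eq_zero.mp (?_ : β * _ = 0)).resolve_right hP
    linear_combination -ω C D * hA + ω A D * hC - ω A C * hD
  · refine (mul_eq_zero.mp (?_ : γ * _ = 0)).resolve_right hP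
    linear_combination ω B D * hA - ω A D * hB + ω A B * hD

namespace AlternatingMap

section CommRing

variable {K V ι : Type*} [CommRing K] [AddCommGroup V] [Module K V] [DecidableEq ι]
  (f : V [⋀^ι]→ₗ[K] K) (Y : ι → V) {p q : ι}

def bracket (p q : ι) (u v : V) : K := f (update (update Y q v) p u)

theorem bracket_self (hpq : p ≠ q) (u : V) : f.bracket Y p q u u = 0 :=
  f.map_eq_zero_of_eq _ (by simp [hpq.symm]) hpq

theorem bracket_swap (hpq : p ≠ q) (u v : V) : f.bracket Y p q v u = -f.bracket Y p q u v := by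
  rw [bracket, bracket, ← f.map_swap _ hpq]
  congr 1
  ext k
  rcases eq_or_ne k p with rfl | hkp
  · simp [hpq.symm]
  rcases eq_or_ne k q with rfl | hkq
  · simp [hkp]
  · simp [Equiv.swap_apply_of_ne_of_ne hkp hkq, hkp, hkq]

theorem bracket_of_ne {k : ι} (hkp : k ≠ p) (hkq : k ≠ q) (v : V) :
    f.bracket Y p q (Y k) v = 0 :=
  f.map_eq_zero_of_eq _ (by simp [hkp, hkq]) hkp.symm

theorem bracket_sum_smul_left {σ : Type*} [Fintype σ] (g : σ → K) (x : σ → V) (v : V) :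
    f.bracket Y p q (∑ t, g t • x t) v = ∑ t, g t * f.bracket Y p q (x t) v := by
  have := map_sum (f.toMultilinearMap.toLinearMap (update Y q v) p) (fun t => g t • x t) .univ
  simp only [map_smul, MultilinearMap.toLinearMap_apply, smul_eq_mul] at this
  exact this

end CommRing

section Field

variable {K V ι : Type*} [Field K] [AddCommGroup V] [Module K V] [DecidableEq ι]
  (f : V [⋀^ι]→ₗ[K] K) (Y : ι → V) {p q : ι}

theorem bracket_eq_zero_of_relation [Fintype ι] {g : ι → K} {A B : V}
    (hg : ∑ j, g j • update (update Y q B) p A j = 0) (hp : g p = 0) (hq : g q = 0) {k : ι}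
    (hk : g k ≠ 0) (u v : V) : f.bracket Y p q u v = 0 := by
  refine f.map_linearDependent _ (Fintype.not_linearIndependent_iff.mpr ⟨g, ?_, k, hk⟩)
  rw [← hg]
  refine Fintype.sum_congr _ _ fun j => ?_
  rcases eq_or_ne j p with rfl | hjp
  · simp [hp]
  rcases eq_or_ne j q with rfl | hjq
  · simp [hq]
  · simp [hjp, hjq]

theorem bracket_plucker [Fintype ι] [FiniteDimensional K V]
    (hdim : Module.finrank K V ≤ Fintype.card ι) (hpq : p ≠ q) (A B C D : V) :
    f.bracket Y p q A B * f.bracket Y p q C D - f.bracket Y p q A C * f.bracket Y p q B D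
      + f.bracket Y p q A D * f.bracket Y p q B C = 0 := by
  set F : Option ι → V := fun o => o.elim C (update (update Y q B) p A)
  obtain ⟨g, hg, k, hk⟩ : ∃ g : Option ι → K, ∑ o, g o • F o = 0 ∧ ∃ k, g k ≠ 0 := by
    refine Fintype.not_linearIndependent_iff.mp fun h => ?_
    have := h.fintype_card_le_finrank
    simp only [Fintype.card_option] at this
    omega
  by_cases hABC : g (some p) = 0 ∧ g (some q) = 0 ∧ g none = 0
  · obtain ⟨hgp, hgq, hgC⟩ := hABC
    rw [Fintype.sum_option, hgC, zero_smul, zero_add] at hg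
    obtain ⟨j, rfl⟩ : ∃ j, k = some j := Option.ne_none_iff_exists'.mp (by rintro rfl; exact hk hgC)
    simp [f.bracket_eq_zero_of_relation Y hg hgp hgq hk]
  · refine plucker_of_left_relation (f.bracket Y p q) (f.bracket_self Y hpq)
      (f.bracket_swap Y hpq) hABC (fun v => ?_) D
    have := f.bracket_sum_smul_left Y (p := p) (q := q) g F v
    rw [hg, Fintype.sum_option, Fintype.sum_eq_add p q hpq
      fun j ⟨hjp, hjq⟩ => by simp [F, hjp, hjq, bracket_of_ne]] at this
    rw [show f.bracket Y p q 0 v = 0 from f.map_update_zero _ _] at this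
    simp [F, hpq.symm] at this
    linear_combination -this

end Field

end AlternatingMap

section Alternant

variable {ι K : Type*} [Fintype ι] [DecidableEq ι]

noncomputable def alternant [CommRing K] (w : ι → K) (e : ι → ℕ) : K :=
  (Matrix.of fun r j => w r ^ e j).det

theorem alternant_comp_perm [CommRing K] (w : ι → K) (e : ι → ℕ) (σ : Equiv.Perm ι) :
    alternant w (e ∘ σ) = Equiv.Perm.sign σ * alternant w e :=
  Matrix.det_permute' σ (.of fun r j => w r ^ e j)

theorem alternant_update_update [CommRing K] (w : ι → K) (e : ι → ℕ) (p q : ι) (u v : ℕ) :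
    alternant w (update (update e q v) p u) =
      Matrix.detRowAlternating.bracket (fun j r => w r ^ e j) p q (w · ^ u) (w · ^ v) := by
  rw [alternant, ← Matrix.det_transpose]
  change Matrix.det (.of ((fun m r => w r ^ m) ∘ update (update e q v) p u)) = _
  rw [comp_update, comp_update]
  rfl

theorem alternant_plucker [Field K] (w : ι → K) (e : ι → ℕ) {p q : ι} (hpq : p ≠ q)
    (A B C D : ℕ) :
    alternant w (update (update e q B) p A) * alternant w (update (update e q D) p C)
      - alternant w (update (update e q C) p A) * alternant w (update (update e q D) p B)
      + alternant w (update (update e q D) p A) * alternant w (update (update e q C) p B) = 0 := by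
  simp only [alternant_update_update]
  exact Matrix.detRowAlternating.bracket_plucker _
    (Module.finrank_fintype_fun_eq_card K).le hpq _ _ _ _

end Alternant

theorem Fin.val_cycleRange {n : ℕ} (i j : Fin n) :
    (i.cycleRange j : ℕ) = if (j : ℕ) < i then (j : ℕ) + 1 else if (j : ℕ) = i then 0 else j := by
  rcases le_or_gt j i with h | h
  · rw [Fin.coe_cycleRange_of_le h]
    rw [Fin.le_def] at h
    split_ifs <;> simp_all [Fin.ext_iff]; omega
  · rw [Fin.cycleRange_of_gt h]
    rw [Fin.lt_def] at h
    split_ifs <;> omega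

def staircase (κ : ℕ) : Fin (κ + 1) → ℕ := fun j => κ - j

theorem schur_eq_div_alternant (κ : ℕ) (lam : Fin (κ + 1) → ℕ) (w : Fin (κ + 1) → ℝ) :
    schur κ lam w = alternant w (lam + staircase κ) / alternant w (staircase κ) := rfl

def rectExps {κ : ℕ} (i : ℕ) (p : Fin κ) (u v : ℕ) : Fin (κ + 1) → ℕ :=
  update (update (rect κ i (p + 1) + staircase κ) p.succ v) 0 u

section RectExponents

variable {κ : ℕ} (i : ℕ) (p : Fin κ)

theorem rectOne_add_staircase :
    rectOne κ i (p + 1) + staircase κ = rectExps i p (i + κ) (κ - (p + 1) + 1) := by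
  ext j
  simp only [rectExps, rect, rectOne, staircase, Pi.add_apply, update_apply, Fin.ext_iff,
    Fin.val_succ, Fin.val_zero]
  split_ifs <;> omega

theorem rect_add_staircase :
    rect κ i (p + 1) + staircase κ = rectExps i p (i + κ) (κ - (p + 1)) := by
  ext j
  simp only [rectExps, rect, staircase, Pi.add_apply, update_apply, Fin.ext_iff, Fin.val_succ,
    Fin.val_zero]
  split_ifs <;> omega

theorem rect_succ_add_staircase :
    rect κ i (p + 1 + 1) + staircase κ = rectExps i p (i + κ) (i + κ - (p + 1)) := by
  ext j
  simp only [rectExps, rect, staircase, Pi.add_apply, update_apply, Fin.ext_iff, Fin.val_succ,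
    Fin.val_zero]
  split_ifs <;> omega

variable {i} (hi : 1 ≤ i)
include hi

theorem rect_pred_add_staircase :
    rect κ (i - 1) (p + 1) + staircase κ =
      rectExps i p (i + κ - (p + 1)) (κ - (p + 1)) ∘ p.castSucc.cycleRange := by
  ext j
  simp only [rectExps, rect, staircase, Pi.add_apply, comp_apply, update_apply, Fin.ext_iff,
    Fin.val_succ, Fin.val_zero, Fin.val_cycleRange, Fin.val_castSucc]
  split_ifs <;> first | contradiction | omega

theorem rectOne_pred_add_staircase :
    rectOne κ (i - 1) (p + 1) + staircase κ =
      rectExps i p (i + κ - (p + 1)) (κ - (p + 1) + 1) ∘ p.castSucc.cycleRange := by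
  ext j
  simp only [rectExps, rect, rectOne, staircase, Pi.add_apply, comp_apply, update_apply,
    Fin.ext_iff, Fin.val_succ, Fin.val_zero, Fin.val_cycleRange, Fin.val_castSucc]
  split_ifs <;> first | contradiction | omega

theorem rect_pred_pred_add_staircase :
    rect κ (i - 1) p + staircase κ =
      rectExps i p (κ - (p + 1) + 1) (κ - (p + 1)) ∘ p.castSucc.cycleRange := by
  ext j
  simp only [rectExps, rect, staircase, Pi.add_apply, comp_apply, update_apply, Fin.ext_iff,
    Fin.val_succ, Fin.val_zero, Fin.val_cycleRange, Fin.val_castSucc]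
  split_ifs <;> first | contradiction | omega

end RectExponents

theorem stmt0_general (κ : ℕ) (i a : ℕ) (hi : 1 ≤ i) (ha1 : 1 ≤ a) (ha2 : a ≤ κ)
    (w : Fin (κ+1) → ℝ) :
    schur κ (rectOne κ i a) w * schur κ (rect κ (i-1) a) w
      - schur κ (rectOne κ (i-1) a) w * schur κ (rect κ i a) w
      = schur κ (rect κ (i-1) (a-1)) w * schur κ (rect κ i (a+1)) w := by
  obtain ⟨p, rfl⟩ : ∃ p : Fin κ, a = p + 1 := ⟨⟨a - 1, by omega⟩, by simp; omega⟩
  have hP := alternant_plucker w (rect κ i (p + 1) + staircase κ) (Fin.succ_ne_zero p).symm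
    (i + κ) (i + κ - (p + 1)) (κ - (p + 1) + 1) (κ - (p + 1))
  simp only [schur_eq_div_alternant, Nat.add_sub_cancel, rectOne_add_staircase, rect_add_staircase,
    rect_succ_add_staircase, rect_pred_add_staircase p hi, rectOne_pred_add_staircase p hi,
    rect_pred_pred_add_staircase p hi, alternant_comp_perm]
  simp only [rectExps]
  -- each product is divided by the square of `alternant w (staircase κ)`, which may vanish
  linear_combination
    (-(Equiv.Perm.sign p.castSucc.cycleRange : ℝ) / alternant w (staircase κ) ^ 2) * hP

theorem stmt0 (κ : ℕ) (hκ : 1 ≤ κ) (i a : ℕ) (hi : 1 ≤ i) (ha1 : 1 ≤ a) (ha2 : a ≤ κ)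
    (w : Fin (κ+1) → ℝ) :
    schur κ (rectOne κ i a) w * schur κ (rect κ (i-1) a) w
      - schur κ (rectOne κ (i-1) a) w * schur κ (rect κ i a) w
      = schur κ (rect κ (i-1) (a-1)) w * schur κ (rect κ i (a+1)) w :=
  stmt0_general κ i a hi ha1 ha2 w
end

section
/- For integers $\kappa \ge 1$, $1 \le a \le \kappa$, $i \ge 1$ and $0<q<1$, define $\varphi_i^{(a)} = \frac{q^{a-1}(1-q)^2(1-q^i)(1-q^{i+\kappa+1})(1+q^{i+a})}{(1-q^{\kappa+1})(1-q^{i+a-1})(1-q^{i+a})(1-q^{i+a+1})}$ (with $\varphi_0^{(a)} = \delta_{a,1}$ obtained by setting $i=0$) and $y_i^{(a)} = \frac{q^{-i}(1-q^i)(1-q^{i+\kappa+1})}{(1-q^a)(1-q^{\kappa+1-a})}$. Then for all $i \ge 1$ and $1 \le a \le \kappa$, the difference equation $\varphi_{i-1}^{(a)} - 2\varphi_i^{(a)} + \varphi_{i+1}^{(a)} = \sum_{b=1}^{\kappa} C_{ab}\, (y_i^{(b)})^{-1} \varphi_i^{(b)}$ holds, where $C_{ab} = 2\delta_{a,b} -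 \delta_{a,b-1} - \delta_{a,b+1}$ is the Cartan matrix of $sl_{\kappa+1}$. -/
/-!
Put `u = q^i`, `v = q^a`, `Q = q^{κ+1}`. Then `φ_i^{(a)}` and `(y_i^{(a)})⁻¹ φ_i^{(a)}` are the
rational functions `phiRat q Q u v` and `yInvPhiRat q Q u v`, with the common denominator
`(1 - Q) (q - uv)(1 - uv)(1 - quv)`. The second one carries the factor `(1 - v)(v - Q)`, so it
vanishes at `a = 0` and `a = κ + 1`: the Cartan sum is the full second difference in `a`, and the
difference equation becomes an identity of rational functions in `u, v, q, Q`, whose denominators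
do not vanish for `0 < q < 1`. The single exception is `i = a = 1`, where `φ_0^{(1)} = 1` is the
boundary value rather than the formula (which reads `0/0` there); this case is a separate
identity in `q` and `Q`.
-/

/-- The scaled vacancy `φ_i^{(a)}` under principal specialization,
with boundary value `φ_0^{(a)} = δ_{a,1}`. -/
noncomputable def phi (κ : ℕ) (q : ℝ) (a i : ℕ) : ℝ :=
  if i = 0 then (if a = 1 then 1 else 0) else
    q ^ (a-1) * (1-q)^2 * (1 - q ^ i) * (1 - q ^ (i+κ+1)) * (1 + q ^ (i+a)) /
      ((1 - q ^ (κ+1)) * (1 - q ^ (i+a-1)) * (1 - q ^ (i+a)) * (1 - q ^ (i+a+1)))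

/-- `y_i^{(a)}` under principal specialization. -/
noncomputable def yy (κ : ℕ) (q : ℝ) (a i : ℕ) : ℝ :=
  (q ^ i)⁻¹ * (1 - q ^ i) * (1 - q ^ (i+κ+1)) / ((1 - q ^ a) * (1 - q ^ (κ+1-a)))

/-- Cartan matrix of `sl_{κ+1}`: `C_{ab} = 2δ_{a,b} - δ_{a,b-1} - δ_{a,b+1}`. -/
def cartan (a b : ℕ) : ℝ :=
  (if a = b then 2 else 0) - (if a + 1 = b then 1 else 0) - (if a = b + 1 then 1 else 0)

section
variable {K : Type*} [Field K]

def qDen (q w : K) : K := (q - w) * (1 - w) * (1 - q * w)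

def phiRat (q Q u v : K) : K :=
  v * (1 - q) ^ 2 * (1 - u) * (1 - u * Q) * (1 + u * v) / ((1 - Q) * qDen q (u * v))

def yInvPhiRat (q Q u v : K) : K :=
  u * (1 - v) * (v - Q) * (1 - q) ^ 2 * (1 + u * v) / ((1 - Q) * qDen q (u * v))

theorem yInvPhiRat_one_right (q Q u : K) : yInvPhiRat q Q u 1 = 0 := by
  simp [yInvPhiRat]

theorem yInvPhiRat_self_right (q Q u : K) : yInvPhiRat q Q u Q = 0 := by
  simp [yInvPhiRat]

theorem phiRat_secondDiff {q Q u v : K} (hQ : 1 - Q ≠ 0) (h₁ : qDen q (u * v * q) ≠ 0)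
    (h₂ : qDen q (u * v * q ^ 2) ≠ 0) (h₃ : qDen q (u * v * q ^ 3) ≠ 0) :
    phiRat q Q u (v * q) - 2 * phiRat q Q (u * q) (v * q) + phiRat q Q (u * q * q) (v * q)
      = 2 * yInvPhiRat q Q (u * q) (v * q) - yInvPhiRat q Q (u * q) v
        - yInvPhiRat q Q (u * q) (v * q * q) := by
  -- `field_simp` writes the arguments of `qDen` as `v * q ^ k * u`.
  rw [show u * v * q = v * q * u by ring] at h₁
  rw [show u * v * q ^ 2 = v * q ^ 2 * u by ring] at h₂
  rw [show u * v * q ^ 3 = v * q ^ 3 * u by ring] at h₃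
  simp only [phiRat, yInvPhiRat]
  field_simp
  simp only [qDen]
  ring

theorem phiRat_secondDiff_boundary {q Q : K} (hQ : 1 - Q ≠ 0) (h₂ : qDen q (q ^ 2) ≠ 0)
    (h₃ : qDen q (q ^ 3) ≠ 0) :
    1 - 2 * phiRat q Q q q + phiRat q Q (q ^ 2) q
      = 2 * yInvPhiRat q Q q q - yInvPhiRat q Q q (q ^ 2) := by
  simp only [phiRat, yInvPhiRat]
  field_simp
  simp only [qDen]
  ring
end

theorem one_sub_pow_ne_zero {q : ℝ} (hq0 : 0 < q) (hq1 : q < 1) {n : ℕ} (hn : n ≠ 0) :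
    1 - q ^ n ≠ 0 :=
  (sub_pos.2 (pow_lt_one₀ hq0.le hq1 hn)).ne'

theorem qDen_pow_ne_zero {q : ℝ} (hq0 : 0 < q) (hq1 : q < 1) {n : ℕ} (hn : 2 ≤ n) :
    qDen q (q ^ n) ≠ 0 := by
  have h₁ : q ^ n < q := pow_lt_self_of_lt_one₀ hq0 hq1 (by omega)
  have h₂ : q ^ n < 1 := pow_lt_one₀ hq0.le hq1 (by omega)
  have h₃ : q * q ^ n < 1 := by rw [← pow_succ']; exact pow_lt_one₀ hq0.le hq1 (by omega)
  unfold qDen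
  exact (mul_pos (mul_pos (sub_pos.2 h₁) (sub_pos.2 h₂)) (sub_pos.2 h₃)).ne'

theorem phi_eq_phiRat {κ : ℕ} {q : ℝ} (hq0 : 0 < q) (hq1 : q < 1) {a i : ℕ} (ha : 1 ≤ a)
    (hia : i ≠ 0 ∨ a ≠ 1) :
    phi κ q a i = phiRat q (q ^ (κ + 1)) (q ^ i) (q ^ a) := by
  rcases Nat.eq_zero_or_pos i with rfl | hi
  · simp [phi, phiRat, show a ≠ 1 by omega]
  obtain ⟨c, rfl⟩ := Nat.exists_eq_add_of_le' ha
  have hden : qDen q (q ^ (i + (c + 1))) ≠ 0 := qDen_pow_ne_zero hq0 hq1 (by omega)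
  have hQ := one_sub_pow_ne_zero hq0 hq1 κ.add_one_ne_zero
  have h₁ := one_sub_pow_ne_zero hq0 hq1 (show i + c ≠ 0 by omega)
  have h₂ := one_sub_pow_ne_zero hq0 hq1 (show i + (c + 1) ≠ 0 by omega)
  have h₃ := one_sub_pow_ne_zero hq0 hq1 (show i + (c + 1) + 1 ≠ 0 by omega)
  rw [phi, if_neg hi.ne', phiRat, ← pow_add q i (c + 1), show i + (c + 1) - 1 = i + c by omega,
    show c + 1 - 1 = c by omega, div_eq_div_iff (by simp [*]) (by simp [*])]
  simp only [qDen]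
  ring

theorem inv_yy_mul_phi {κ : ℕ} {q : ℝ} (hq0 : 0 < q) (hq1 : q < 1) {b i : ℕ} (hi : 1 ≤ i)
    (hb1 : 1 ≤ b) (hb2 : b ≤ κ) :
    (yy κ q b i)⁻¹ * phi κ q b i = yInvPhiRat q (q ^ (κ + 1)) (q ^ i) (q ^ b) := by
  rw [phi_eq_phiRat hq0 hq1 hb1 (Or.inl (by omega)), yy, phiRat, yInvPhiRat]
  have hQ := one_sub_pow_ne_zero hq0 hq1 κ.add_one_ne_zero
  have h₁ := one_sub_pow_ne_zero hq0 hq1 (show i ≠ 0 by omega)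
  have h₂ : 1 - q ^ i * q ^ (κ + 1) ≠ 0 := by
    rw [← pow_add]; exact one_sub_pow_ne_zero hq0 hq1 (by omega)
  have h₃ := one_sub_pow_ne_zero hq0 hq1 (show b ≠ 0 by omega)
  have h₄ := one_sub_pow_ne_zero hq0 hq1 (show κ + 1 - b ≠ 0 by omega)
  have hden : qDen q (q ^ i * q ^ b) ≠ 0 := by
    rw [← pow_add]; exact qDen_pow_ne_zero hq0 hq1 (by omega)
  have hsplit : q ^ b - q ^ (κ + 1) = q ^ b * (1 - q ^ (κ + 1 - b)) := by
    rw [mul_sub, mul_one, ← pow_add]; congr 2; omega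
  rw [hsplit, show i + κ + 1 = i + (κ + 1) by omega, pow_add q i (κ + 1)]
  field_simp

theorem sum_cartan_mul {κ a : ℕ} (X : ℕ → ℝ) (hX₀ : X 0 = 0) (hXκ : X (κ + 1) = 0)
    (ha₁ : 1 ≤ a) (ha₂ : a ≤ κ) :
    ∑ b ∈ Finset.Icc 1 κ, cartan a b * X b = 2 * X a - X (a - 1) - X (a + 1) := by
  obtain ⟨c, rfl⟩ := Nat.exists_eq_add_of_le' ha₁
  simp only [cartan, sub_mul, ite_mul, zero_mul, one_mul, Finset.sum_sub_distrib,
    Nat.add_right_cancel_iff, Finset.sum_ite_eq, Finset.mem_Icc, Nat.add_sub_cancel]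
  rw [if_pos ⟨ha₁, ha₂⟩]
  have hright : (if 1 ≤ c + 1 + 1 ∧ c + 1 + 1 ≤ κ then X (c + 1 + 1) else 0) = X (c + 1 + 1) := by
    split_ifs with h
    · rfl
    · rw [show c + 1 + 1 = κ + 1 by omega, hXκ]
  have hleft : (if 1 ≤ c ∧ c ≤ κ then X c else 0) = X c := by
    split_ifs with h
    · rfl
    · rw [show c = 0 by omega, hX₀]
  rw [hright, hleft]
  ring

theorem stmt3_general (κ : ℕ) (q : ℝ) (hq0 : 0 < q) (hq1 : q < 1)
    (i a : ℕ) (hi : 1 ≤ i) (ha1 : 1 ≤ a) (ha2 : a ≤ κ) :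
    phi κ q a (i-1) - 2 * phi κ q a i + phi κ q a (i+1)
      = ∑ b ∈ Finset.Icc 1 κ, cartan a b * (yy κ q b i)⁻¹ * phi κ q b i := by
  have hQ := one_sub_pow_ne_zero hq0 hq1 κ.add_one_ne_zero
  rw [Finset.sum_congr rfl fun b hb => by
      rw [mul_assoc, inv_yy_mul_phi hq0 hq1 hi (Finset.mem_Icc.1 hb).1 (Finset.mem_Icc.1 hb).2],
    sum_cartan_mul _ (yInvPhiRat_one_right _ _ _) (yInvPhiRat_self_right _ _ _) ha1 ha2]
  obtain ⟨j, rfl⟩ := Nat.exists_eq_add_of_le' hi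
  obtain ⟨c, rfl⟩ := Nat.exists_eq_add_of_le' ha1
  simp only [Nat.add_sub_cancel]
  by_cases hjc : j = 0 ∧ c = 0
  · obtain ⟨rfl, rfl⟩ := hjc
    simp only [zero_add, Nat.reduceAdd]
    rw [show phi κ q 1 0 = 1 by simp [phi], phi_eq_phiRat hq0 hq1 le_rfl (Or.inl one_ne_zero),
      phi_eq_phiRat hq0 hq1 le_rfl (Or.inl two_ne_zero), pow_zero, yInvPhiRat_one_right, sub_zero]
    simpa using phiRat_secondDiff_boundary hQ (qDen_pow_ne_zero hq0 hq1 le_rfl)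
      (qDen_pow_ne_zero hq0 hq1 (by norm_num))
  · have hden : ∀ k, 1 ≤ k → qDen q (q ^ j * q ^ c * q ^ k) ≠ 0 := fun k hk => by
      rw [← pow_add, ← pow_add]; exact qDen_pow_ne_zero hq0 hq1 (by omega)
    rw [phi_eq_phiRat hq0 hq1 ha1 (by omega), phi_eq_phiRat hq0 hq1 ha1 (by omega),
      phi_eq_phiRat hq0 hq1 ha1 (by omega)]
    simp only [pow_succ] at hQ ⊢
    exact phiRat_secondDiff hQ (by simpa using hden 1 le_rfl) (hden 2 (by norm_num))
      (hden 3 (by norm_num))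

theorem stmt3 (κ : ℕ) (hκ : 1 ≤ κ) (q : ℝ) (hq0 : 0 < q) (hq1 : q < 1)
    (i a : ℕ) (hi : 1 ≤ i) (ha1 : 1 ≤ a) (ha2 : a ≤ κ) :
    phi κ q a (i-1) - 2 * phi κ q a i + phi κ q a (i+1)
      = ∑ b ∈ Finset.Icc 1 κ, cartan a b * (yy κ q b i)⁻¹ * phi κ q b i :=
  stmt3_general κ q hq0 hq1 i a hi ha1 ha2
end

section
/- For $0<q<1$, $\kappa\ge 1$, $1 \le a \le \kappa$, $i \ge 1$, with $\varphi_i^{(a)}$ as in the principal specialization formula and $(C^{-1})_{ab} = \min(a,b) - \frac{ab}{\kappa+1}$, the telescoped sum satisfies $\sum_{b=1}^\kappa (C^{-1})_{ab}(\varphi_{i-1}^{(b)} - \varphi_i^{(b)}) = \frac{q^{i+a-1}(1-q)(1-q^a)(1-q^{\kappa+1-a})}{(1-q^{\kappa+1})(1-q^{i+a-1})(1-q^{i+a})}$, where $\varphi_0^{(b)} = \delta_{b,1}$ and $\varphi_i^{(b)} = \frac{q^{b-1}(1-q)^2(1-q^i)(1-q^{i+\kappa+1})(1+q^{i+b})}{(1-q^{\kappa+1})(1-q^{i+b-1})(1-q^{i+b})(1-q^{i+b+1})}$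 for $i \ge 1$. -/
/-- Inverse Cartan matrix entries `(C⁻¹)_{ab} = min(a,b) - ab/(κ+1)`. -/
noncomputable def cartanInv (κ a b : ℕ) : ℝ :=
  (min a b : ℝ) - ((a:ℝ) * b) / ((κ:ℝ) + 1)

/-!
With `T = q^(κ+1)` and `Ψ_i(b) = q^(i+b) (1 - q^b) (1 - q^(κ+1-b)) / ((1 - T) (1 - q^(i+b)))`
(`phiPotential κ q i b`),
the vacancies satisfy `φ_i^{(b)} = q^(b-1) (1 - q)^2 / (1 - T) + (C Ψ_i)_b` for every `i ≥ 0`,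
where `C` is the Cartan matrix and `Ψ_i` vanishes at `b = 0` and `b = κ + 1`.
The first term does not depend on `i`, so `φ_{i-1} - φ_i = C (Ψ_{i-1} - Ψ_i)`, and applying `C⁻¹`
leaves `Ψ_{i-1}(a) - Ψ_i(a)`, which is the claimed value because
`q^(m-1) / ((1 - q^(m-1)) (1 - q^m)) = (1/(1 - q^(m-1)) - 1/(1 - q^m)) / (1 - q)`.
-/

open Finset

/-- `(C f)_b` for the Cartan matrix `C` of type `A_κ` and `1 ≤ b ≤ κ`: a vector is encoded as a
function on `ℕ` whose values at `0` and `κ + 1` are zero boundary values. -/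
def cartanApply (f : ℕ → ℝ) (b : ℕ) : ℝ :=
  2 * f b - f (b - 1) - f (b + 1)

theorem sum_Icc_one_comp_pred_add {M : Type*} [AddCommMonoid M] (h : ℕ → M) (n : ℕ) :
    ∑ b ∈ Icc 1 n, h (b - 1) + h n = h 0 + ∑ b ∈ Icc 1 n, h b := by
  induction n with
  | zero => simp
  | succ n ih =>
    rw [sum_Icc_succ_top (by omega), sum_Icc_succ_top (by omega), Nat.add_sub_cancel,
      ← add_assoc, ih, add_assoc]

theorem sum_Icc_mul_succ_eq_sum_Icc_pred_mul (u v : ℕ → ℝ) (n : ℕ) (hu : u 0 = 0)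
    (hv : v (n + 1) = 0) :
    ∑ b ∈ Icc 1 n, u b * v (b + 1) = ∑ b ∈ Icc 1 n, u (b - 1) * v b := by
  have h := sum_Icc_one_comp_pred_add (fun j ↦ u j * v (j + 1)) n
  rw [hu, hv, zero_mul, mul_zero, add_zero, zero_add] at h
  rw [← h]
  exact sum_congr rfl fun b hb ↦ by rw [Nat.sub_add_cancel (mem_Icc.mp hb).1]

theorem sum_mul_cartanApply_comm (f g : ℕ → ℝ) (n : ℕ) (hf0 : f 0 = 0) (hfn : f (n + 1) = 0)
    (hg0 : g 0 = 0) (hgn : g (n + 1) = 0) :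
    ∑ b ∈ Icc 1 n, g b * cartanApply f b = ∑ b ∈ Icc 1 n, f b * cartanApply g b := by
  simp only [cartanApply, mul_sub, sum_sub_distrib,
    sum_Icc_mul_succ_eq_sum_Icc_pred_mul g f n hg0 hfn,
    sum_Icc_mul_succ_eq_sum_Icc_pred_mul f g n hf0 hgn]
  rw [sub_right_comm]
  congr 1
  congr 1
  all_goals exact sum_congr rfl fun b _ ↦ by ring

theorem cartanInv_zero_right (κ a : ℕ) : cartanInv κ a 0 = 0 := by
  simp [cartanInv]

theorem cartanInv_succ_right (κ a : ℕ) (ha : a ≤ κ + 1) : cartanInv κ a (κ + 1) = 0 := by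
  have : (a : ℝ) ≤ κ + 1 := by exact_mod_cast ha
  rw [cartanInv, Nat.cast_add_one, min_eq_left this]
  field_simp
  ring

theorem cartanApply_cartanInv (κ a b : ℕ) (hb : 1 ≤ b) :
    cartanApply (cartanInv κ a) b = if b = a then 1 else 0 := by
  obtain ⟨c, rfl⟩ : ∃ c, b = c + 1 := ⟨b - 1, by omega⟩
  have hmin : (2 * min a (c + 1) - min a c - min a (c + 1 + 1) : ℤ) =
      if c + 1 = a then 1 else 0 := by
    split_ifs <;> omega
  calc _ = ((2 * min a (c + 1) - min a c - min a (c + 1 + 1) : ℤ) : ℝ) := by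
        simp only [cartanApply, cartanInv, Nat.add_sub_cancel]; push_cast; ring
    _ = _ := by rw [hmin]; split_ifs <;> simp

theorem sum_cartanInv_mul_cartanApply (κ a : ℕ) (ha1 : 1 ≤ a) (ha2 : a ≤ κ) (f : ℕ → ℝ)
    (hf0 : f 0 = 0) (hfκ : f (κ + 1) = 0) :
    ∑ b ∈ Icc 1 κ, cartanInv κ a b * cartanApply f b = f a := by
  rw [sum_mul_cartanApply_comm f _ κ hf0 hfκ (cartanInv_zero_right κ a)
    (cartanInv_succ_right κ a (by omega))]
  rw [sum_congr rfl fun b hb ↦ by rw [cartanApply_cartanInv κ a b (mem_Icc.mp hb).1]]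
  simp [ha1, ha2]

noncomputable def phiPotential (κ : ℕ) (q : ℝ) (i b : ℕ) : ℝ :=
  q ^ (i + b) * (1 - q ^ b) * (1 - q ^ (κ + 1 - b)) / ((1 - q ^ (κ + 1)) * (1 - q ^ (i + b)))

theorem phiPotential_zero_right (κ : ℕ) (q : ℝ) (i : ℕ) : phiPotential κ q i 0 = 0 := by
  simp [phiPotential]

theorem phiPotential_succ_right (κ : ℕ) (q : ℝ) (i : ℕ) : phiPotential κ q i (κ + 1) = 0 := by
  simp [phiPotential]

theorem phi_eq_of_ne_zero_or_ne_one (κ : ℕ) (q : ℝ) (a i : ℕ) (h : i ≠ 0 ∨ a ≠ 1) :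
    phi κ q a i = q ^ (a-1) * (1-q)^2 * (1 - q ^ i) * (1 - q ^ (i+κ+1)) * (1 + q ^ (i+a)) /
      ((1 - q ^ (κ+1)) * (1 - q ^ (i+a-1)) * (1 - q ^ (i+a)) * (1 - q ^ (i+a+1))) := by
  rcases eq_or_ne i 0 with rfl | hi
  · simp [phi, h.resolve_left (not_not.mpr rfl)]
  · simp [phi, hi]

theorem phi_eq_add_cartanApply_phiPotential (κ : ℕ) (q : ℝ) (hq : ∀ n ≠ 0, q ^ n ≠ 1)
    (b i : ℕ) (hb1 : 1 ≤ b) (hb2 : b ≤ κ) :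
    phi κ q b i = q ^ (b - 1) * (1 - q) ^ 2 / (1 - q ^ (κ + 1)) +
      cartanApply (phiPotential κ q i) b := by
  have hne (n : ℕ) (hn : n ≠ 0) : 1 - q ^ n ≠ 0 := sub_ne_zero.mpr (hq n hn).symm
  obtain ⟨c, rfl⟩ : ∃ c, b = c + 1 := ⟨b - 1, by omega⟩
  obtain ⟨t, rfl⟩ : ∃ t, κ = c + t + 1 := ⟨κ - (c + 1), by omega⟩
  by_cases h : i = 0 ∧ c = 0
  · obtain ⟨rfl, rfl⟩ := h
    have h1 : 1 - q ≠ 0 := by simpa using hne 1 one_ne_zero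
    have h2 := hne 2 two_ne_zero
    have h3 := hne (t + 2) (by omega)
    simp only [phi, phiPotential, cartanApply, ↓reduceIte, zero_add, tsub_self, pow_zero, one_mul,
      pow_one, add_tsub_cancel_right, add_zero, sub_self, mul_zero, tsub_zero, zero_mul, div_zero,
      Nat.reduceAdd, Nat.reduceSubDiff]
    field_simp
    ring
  · rw [phi_eq_of_ne_zero_or_ne_one _ _ _ _ (by omega)]
    simp only [cartanApply, phiPotential, Nat.add_sub_cancel,
      show i + (c + 1) - 1 = i + c by omega, show c + t + 1 + 1 - (c + 1) = t + 1 by omega,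
      show c + t + 1 + 1 - c = t + 2 by omega, show c + t + 1 + 1 - (c + 1 + 1) = t by omega,
      show i + (c + 1 + 1) = i + (c + 1) + 1 by omega]
    have hD := hne (c + t + 1 + 1) (by omega)
    have hd0 := hne (i + c) (by omega)
    have hd1 := hne (i + (c + 1)) (by omega)
    have hd2 := hne (i + (c + 1) + 1) (by omega)
    -- `field_simp` clears these denominators reliably only as atoms.
    generalize 1 - q ^ (c + t + 1 + 1) = D at *
    generalize e0 : 1 - q ^ (i + c) = d0 at *
    generalize e1 : 1 - q ^ (i + (c + 1)) = d1 at *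
    generalize e2 : 1 - q ^ (i + (c + 1) + 1) = d2 at *
    field_simp
    subst e0 e1 e2
    ring

theorem phiPotential_pred_sub (κ : ℕ) (q : ℝ) (hq : ∀ n ≠ 0, q ^ n ≠ 1) (i a : ℕ) (hi : 1 ≤ i)
    (ha : 1 ≤ a) :
    phiPotential κ q (i - 1) a - phiPotential κ q i a
      = q ^ (i + a - 1) * (1 - q) * (1 - q ^ a) * (1 - q ^ (κ + 1 - a)) /
        ((1 - q ^ (κ + 1)) * (1 - q ^ (i + a - 1)) * (1 - q ^ (i + a))) := by
  have hne (n : ℕ) (hn : n ≠ 0) : 1 - q ^ n ≠ 0 := sub_ne_zero.mpr (hq n hn).symm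
  obtain ⟨n, rfl⟩ : ∃ n, i = n + 1 := ⟨i - 1, by omega⟩
  have hT := hne (κ + 1) (by omega)
  have h0 := hne (n + a) (by omega)
  have h1 := hne (n + 1 + a) (by omega)
  simp only [phiPotential, Nat.add_sub_cancel, show n + 1 + a - 1 = n + a by omega]
  field_simp
  ring

theorem stmt5_general (κ : ℕ) (q : ℝ) (hq0 : 0 < q) (hq1 : q < 1)
    (a i : ℕ) (ha1 : 1 ≤ a) (ha2 : a ≤ κ) (hi : 1 ≤ i) :
    ∑ b ∈ Finset.Icc 1 κ, cartanInv κ a b * (phi κ q b (i-1) - phi κ q b i)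
      = q ^ (i+a-1) * (1-q) * (1 - q ^ a) * (1 - q ^ (κ+1-a)) /
        ((1 - q ^ (κ+1)) * (1 - q ^ (i+a-1)) * (1 - q ^ (i+a))) := by
  have hq : ∀ n ≠ 0, q ^ n ≠ 1 := fun n hn ↦ (pow_lt_one₀ hq0.le hq1 hn).ne
  set f : ℕ → ℝ := fun b ↦ phiPotential κ q (i - 1) b - phiPotential κ q i b with hf
  have hdiff : ∀ b ∈ Icc 1 κ, phi κ q b (i - 1) - phi κ q b i = cartanApply f b := by
    intro b hb
    obtain ⟨hb1, hb2⟩ := mem_Icc.mp hb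
    rw [phi_eq_add_cartanApply_phiPotential κ q hq b (i - 1) hb1 hb2,
      phi_eq_add_cartanApply_phiPotential κ q hq b i hb1 hb2]
    simp only [cartanApply, hf]
    ring
  rw [sum_congr rfl fun b hb ↦ by rw [hdiff b hb],
    sum_cartanInv_mul_cartanApply κ a ha1 ha2 f (by simp [hf, phiPotential_zero_right])
      (by simp [hf, phiPotential_succ_right])]
  exact phiPotential_pred_sub κ q hq i a hi ha1

theorem stmt5 (κ : ℕ) (hκ : 1 ≤ κ) (q : ℝ) (hq0 : 0 < q) (hq1 : q < 1)
    (a i : ℕ) (ha1 : 1 ≤ a) (ha2 : a ≤ κ) (hi : 1 ≤ i) :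
    ∑ b ∈ Finset.Icc 1 κ, cartanInv κ a b * (phi κ q b (i-1) - phi κ q b i)
      = q ^ (i+a-1) * (1-q) * (1 - q ^ a) * (1 - q ^ (κ+1-a)) /
        ((1 - q ^ (κ+1)) * (1 - q ^ (i+a-1)) * (1 - q ^ (i+a))) :=
  stmt5_general κ q hq0 hq1 a i ha1 ha2 hi
end

section
/- Let $Q_i^{(a)}$ ($1\le a\le\kappa$, $i\ge 0$, with $Q_0^{(a)}=1$, $Q_{-1}^{(a)}=0$, $Q_i^{(0)}=Q_i^{(\kappa+1)}=1$) be positive reals satisfying the Q-system $(Q_i^{(a)})^2 = Q_{i-1}^{(a)} Q_{i+1}^{(a)} + Q_i^{(a-1)} Q_i^{(a+1)}$ for all $i\ge 0$ and $1\le a\le\kappa$. Define $y_i^{(a)} = \frac{Q_{i-1}^{(a)} Q_{i+1}^{(a)}}{Q_i^{(a-1)} Q_i^{(a+1)}}$. Then for all $i \ge 1$ and $1 \le a \le \kappa$: $1 + y_i^{(a)} = \prod_{b=1}^{\kappa} (Q_i^{(b)})^{C_{ab}}$ and $1 + (y_i^{(a)})^{-1} = \frac{(Q_i^{(a)})^2}{Q_{i-1}^{(a)}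 Q_{i+1}^{(a)}}$, and consequently the Y-system holds: $\frac{(1+y_i^{(a)})^2}{(1+y_{i-1}^{(a)})(1+y_{i+1}^{(a)})} = \prod_{b=1}^{\kappa} (1+(y_i^{(b)})^{-1})^{C_{ab}}$ for $i \ge 2$ (where all involved $y$'s are positive). -/
/-!
Dividing the Q-system relation by `Q_i^{(a-1)} Q_i^{(a+1)}`, resp. by `Q_{i-1}^{(a)} Q_{i+1}^{(a)}`,
gives the two formulas for `1 + y` and `1 + y⁻¹`. For the Y-system, write each of
`1 + y_{i-1}^{(a)}, 1 + y_i^{(a)}, 1 + y_{i+1}^{(a)}` as a product of Cartan-matrix powers of the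
`Q_j^{(b)}`; the left-hand side then regroups, factor by factor in `b`, into the right-hand side.
-/

/-- Cartan matrix of `sl_{κ+1}`, integer valued (used as a `zpow` exponent). -/
def cartanZ (a b : ℕ) : ℤ :=
  (if a = b then 2 else 0) - (if a + 1 = b then 1 else 0) - (if a = b + 1 then 1 else 0)

open Finset

lemma zpow_cartanZ {G : Type*} [DivisionMonoid G] (x : G) {a b : ℕ} (ha : 1 ≤ a) :
    x ^ cartanZ a b =
      (if a = b then x ^ 2 else 1) * (if a + 1 = b then x⁻¹ else 1) *
        (if a - 1 = b then x⁻¹ else 1) := by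
  have hsub : (a = b + 1) ↔ (a - 1 = b) := by omega
  simp only [cartanZ, hsub]
  split_ifs <;> first | omega | simp

lemma prod_Icc_zpow_cartanZ {G : Type*} [DivisionCommMonoid G] {κ a : ℕ} (f : ℕ → G)
    (h0 : f 0 = 1) (hκ : f (κ + 1) = 1) (ha1 : 1 ≤ a) (ha : a ≤ κ) :
    ∏ b ∈ Icc 1 κ, f b ^ cartanZ a b = f a ^ 2 / (f (a - 1) * f (a + 1)) := by
  simp only [zpow_cartanZ _ ha1, prod_mul_distrib, prod_ite_eq, mem_Icc]
  have hsucc : (if 1 ≤ a + 1 ∧ a + 1 ≤ κ then (f (a + 1))⁻¹ else 1) = (f (a + 1))⁻¹ := by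
    split_ifs
    · rfl
    · rw [show a + 1 = κ + 1 by omega, hκ, inv_one]
  have hpred : (if 1 ≤ a - 1 ∧ a - 1 ≤ κ then (f (a - 1))⁻¹ else 1) = (f (a - 1))⁻¹ := by
    split_ifs
    · rfl
    · rw [show a - 1 = 0 by omega, h0, inv_one]
  rw [if_pos ⟨ha1, ha⟩, hsucc, hpred, div_eq_mul_inv, mul_inv, mul_comm (f (a - 1))⁻¹, mul_assoc]

lemma sq_prod_zpow_div {ι G : Type*} [DivisionCommMonoid G] (s : Finset ι) (e : ι → ℤ)
    (f g h : ι → G) :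
    (∏ b ∈ s, f b ^ e b) ^ 2 / ((∏ b ∈ s, g b ^ e b) * ∏ b ∈ s, h b ^ e b)
      = ∏ b ∈ s, (f b ^ 2 / (g b * h b)) ^ e b := by
  rw [← prod_pow, ← prod_mul_distrib, ← prod_div_distrib]
  refine prod_congr rfl fun b _ => ?_
  rw [div_zpow, mul_zpow, ← zpow_natCast, ← zpow_natCast, ← zpow_mul, ← zpow_mul, mul_comm]

theorem stmt8_general (κ : ℕ) (Q : ℕ → ℤ → ℝ)
    (hpos : ∀ a : ℕ, a ≤ κ + 1 → ∀ i : ℤ, 0 ≤ i → 0 < Q a i)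
    (hbdy0 : ∀ i : ℤ, 0 ≤ i → Q 0 i = 1)
    (hbdyk : ∀ i : ℤ, 0 ≤ i → Q (κ+1) i = 1)
    (hQsys : ∀ i : ℤ, 0 ≤ i → ∀ a : ℕ, 1 ≤ a → a ≤ κ →
      (Q a i)^2 = Q a (i-1) * Q a (i+1) + Q (a-1) i * Q (a+1) i)
    (y : ℕ → ℤ → ℝ)
    (hy : ∀ a : ℕ, ∀ i : ℤ, y a i = Q a (i-1) * Q a (i+1) / (Q (a-1) i * Q (a+1) i)) :
    (∀ i : ℤ, 1 ≤ i → ∀ a : ℕ, 1 ≤ a → a ≤ κ →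
      (1 + y a i = ∏ b ∈ Finset.Icc 1 κ, (Q b i) ^ (cartanZ a b)
        ∧ 1 + (y a i)⁻¹ = (Q a i)^2 / (Q a (i-1) * Q a (i+1))))
    ∧ (∀ i : ℤ, 2 ≤ i → ∀ a : ℕ, 1 ≤ a → a ≤ κ →
      (1 + y a i)^2 / ((1 + y a (i-1)) * (1 + y a (i+1)))
        = ∏ b ∈ Finset.Icc 1 κ, (1 + (y b i)⁻¹) ^ (cartanZ a b)) := by
  have hne : ∀ a, a ≤ κ + 1 → ∀ i : ℤ, 0 ≤ i → Q a i ≠ 0 := fun a ha i hi => (hpos a ha i hi).ne'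
  have one_add_y : ∀ i : ℤ, 1 ≤ i → ∀ a : ℕ, 1 ≤ a → a ≤ κ →
      1 + y a i = ∏ b ∈ Icc 1 κ, Q b i ^ cartanZ a b := by
    intro i hi a ha1 ha
    rw [hy,
      one_add_div (mul_ne_zero (hne _ (by omega) i (by omega)) (hne _ (by omega) i (by omega))),
      add_comm, ← hQsys i (by omega) a ha1 ha,
      prod_Icc_zpow_cartanZ (fun b => Q b i) (hbdy0 i (by omega)) (hbdyk i (by omega)) ha1 ha]
  have one_add_inv_y : ∀ i : ℤ, 1 ≤ i → ∀ a : ℕ, 1 ≤ a → a ≤ κ →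
      1 + (y a i)⁻¹ = Q a i ^ 2 / (Q a (i - 1) * Q a (i + 1)) := by
    intro i hi a ha1 ha
    rw [hy, inv_div,
      one_add_div (mul_ne_zero (hne a (by omega) _ (by omega)) (hne a (by omega) _ (by omega))),
      ← hQsys i (by omega) a ha1 ha]
  refine ⟨fun i hi a ha1 ha => ⟨one_add_y i hi a ha1 ha, one_add_inv_y i hi a ha1 ha⟩,
    fun i hi a ha1 ha => ?_⟩
  rw [one_add_y i (by omega) a ha1 ha, one_add_y (i - 1) (by omega) a ha1 ha,
    one_add_y (i + 1) (by omega) a ha1 ha, sq_prod_zpow_div]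
  refine prod_congr rfl fun b hb => ?_
  rw [mem_Icc] at hb
  rw [one_add_inv_y i (by omega) b hb.1 hb.2]

theorem stmt8 (κ : ℕ) (hκ : 1 ≤ κ) (Q : ℕ → ℤ → ℝ)
    (hpos : ∀ a : ℕ, a ≤ κ + 1 → ∀ i : ℤ, 0 ≤ i → 0 < Q a i)
    (h0 : ∀ a : ℕ, Q a 0 = 1) (hm1 : ∀ a : ℕ, Q a (-1) = 0)
    (hbdy0 : ∀ i : ℤ, 0 ≤ i → Q 0 i = 1)
    (hbdyk : ∀ i : ℤ, 0 ≤ i → Q (κ+1) i = 1)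
    (hQsys : ∀ i : ℤ, 0 ≤ i → ∀ a : ℕ, 1 ≤ a → a ≤ κ →
      (Q a i)^2 = Q a (i-1) * Q a (i+1) + Q (a-1) i * Q (a+1) i)
    (y : ℕ → ℤ → ℝ)
    (hy : ∀ a : ℕ, ∀ i : ℤ, y a i = Q a (i-1) * Q a (i+1) / (Q (a-1) i * Q (a+1) i)) :
    (∀ i : ℤ, 1 ≤ i → ∀ a : ℕ, 1 ≤ a → a ≤ κ →
      (1 + y a i = ∏ b ∈ Finset.Icc 1 κ, (Q b i) ^ (cartanZ a b)
        ∧ 1 + (y a i)⁻¹ = (Q a i)^2 / (Q a (i-1) * Q a (i+1))))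
    ∧ (∀ i : ℤ, 2 ≤ i → ∀ a : ℕ, 1 ≤ a → a ≤ κ →
      (1 + y a i)^2 / ((1 + y a (i-1)) * (1 + y a (i+1)))
        = ∏ b ∈ Finset.Icc 1 κ, (1 + (y b i)⁻¹) ^ (cartanZ a b)) :=
  stmt8_general κ Q hpos hbdy0 hbdyk hQsys y hy
end

section
/- Let $0<q<1$, $\kappa\ge 1$, $1\le a\le\kappa$. Define $\xi_i^{(a)} = \frac{q^{i+a-1}(1-q)^2(1-q^a)(1-q^{\kappa+1-a})(1+q^{i+a})}{(1-q^{\kappa+1})(1-q^{i+a-1})(1-q^{i+a})(1-q^{i+a+1})}$ for $i \ge 1$. Then for every integer $\lambda \ge 1$, the tail sum satisfies $\sum_{i \ge \lambda} \xi_i^{(a)} = \frac{q^{\lambda+a-1}(1-q)(1-q^a)(1-q^{\kappa+1-a})}{(1-q^{\kappa+1})(1-q^{\lambda+a-1})(1-q^{\lambda+a})}$. -/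
/-!
With `C = (1 - q^a)(1 - q^(κ+1-a)) / (1 - q^(κ+1))` and `n = i + a - 1`, the term `ξ_i^{(a)}` is
`C (g n - g (n+1))` for `g n = q^n (1-q) / ((1-q^n)(1-q^(n+1))) = 1/(1-q^n) - 1/(1-q^(n+1))`.
The series therefore telescopes, and its tail from `λ` sums to `C g(λ + a - 1)` because `g n → 0`.
-/

/-- The scaled column multiplicity `ξ_i^{(a)}` under principal specialization. -/
noncomputable def xi (κ : ℕ) (q : ℝ) (a i : ℕ) : ℝ :=
  q ^ (i+a-1) * (1-q)^2 * (1 - q ^ a) * (1 - q ^ (κ+1-a)) * (1 + q ^ (i+a)) /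
    ((1 - q ^ (κ+1)) * (1 - q ^ (i+a-1)) * (1 - q ^ (i+a)) * (1 - q ^ (i+a+1)))

open Filter Topology

theorem hasSum_sub_succ_of_antitone {f : ℕ → ℝ} {l : ℝ} (hf : Antitone f)
    (hlim : Tendsto f atTop (𝓝 l)) : HasSum (fun n => f n - f (n + 1)) (f 0 - l) := by
  rw [hasSum_iff_tendsto_nat_of_nonneg fun n => sub_nonneg.2 (hf n.le_succ)]
  simpa only [Finset.sum_range_sub'] using tendsto_const_nhds.sub hlim

section

variable {q : ℝ}

theorem one_sub_pow_pos (hq0 : 0 ≤ q) (hq1 : q < 1) {m : ℕ} (hm : m ≠ 0) : 0 < 1 - q ^ m :=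
  sub_pos.2 (pow_lt_one₀ hq0 hq1 hm)

theorem tendsto_pow_mul_one_sub_div (hq0 : 0 ≤ q) (hq1 : q < 1) :
    Tendsto (fun n : ℕ => q ^ n * (1 - q) / ((1 - q ^ n) * (1 - q ^ (n + 1)))) atTop (𝓝 0) := by
  have hpow := tendsto_pow_atTop_nhds_zero_of_lt_one hq0 hq1
  have hpow_succ := hpow.comp (tendsto_add_atTop_nat 1)
  have hden := (tendsto_const_nhds (x := (1 : ℝ))).sub hpow |>.mul
    ((tendsto_const_nhds (x := (1 : ℝ))).sub hpow_succ)
  simpa [Pi.div_def] using (hpow.mul_const (1 - q)).div hden (by norm_num)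

theorem pow_mul_one_sub_div_sub_succ (hq0 : 0 ≤ q) (hq1 : q < 1) {n : ℕ} (hn : n ≠ 0) :
    q ^ n * (1 - q) / ((1 - q ^ n) * (1 - q ^ (n + 1)))
        - q ^ (n + 1) * (1 - q) / ((1 - q ^ (n + 1)) * (1 - q ^ (n + 2)))
      = q ^ n * (1 - q) ^ 2 * (1 + q ^ (n + 1))
          / ((1 - q ^ n) * (1 - q ^ (n + 1)) * (1 - q ^ (n + 2))) := by
  have h0 := (one_sub_pow_pos hq0 hq1 hn).ne'
  have h1 := (one_sub_pow_pos hq0 hq1 n.succ_ne_zero).ne'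
  have h2 := (one_sub_pow_pos hq0 hq1 (n + 1).succ_ne_zero).ne'
  field_simp
  ring

theorem hasSum_pow_mul_one_sub_sq_div (hq0 : 0 ≤ q) (hq1 : q < 1) {c : ℕ} (hc : c ≠ 0) :
    HasSum (fun k : ℕ => q ^ (c + k) * (1 - q) ^ 2 * (1 + q ^ (c + k + 1))
        / ((1 - q ^ (c + k)) * (1 - q ^ (c + k + 1)) * (1 - q ^ (c + k + 2))))
      (q ^ c * (1 - q) / ((1 - q ^ c) * (1 - q ^ (c + 1)))) := by
  set g : ℕ → ℝ := fun n => q ^ n * (1 - q) / ((1 - q ^ n) * (1 - q ^ (n + 1)))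
  have hstep (k : ℕ) : g (c + k) - g (c + (k + 1)) = q ^ (c + k) * (1 - q) ^ 2 * (1 + q ^ (c + k + 1))
      / ((1 - q ^ (c + k)) * (1 - q ^ (c + k + 1)) * (1 - q ^ (c + k + 2))) :=
    pow_mul_one_sub_div_sub_succ hq0 hq1 (by omega)
  have hanti : Antitone fun k => g (c + k) := by
    refine antitone_nat_of_succ_le fun k => sub_nonneg.1 ?_
    rw [hstep]
    have := one_sub_pow_pos hq0 hq1 (m := c + k) (by omega)
    have := one_sub_pow_pos hq0 hq1 (m := c + k + 1) (by omega)
    have := one_sub_pow_pos hq0 hq1 (m := c + k + 2) (by omega)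
    positivity
  have hlim : Tendsto (fun k => g (c + k)) atTop (𝓝 0) :=
    (tendsto_pow_mul_one_sub_div hq0 hq1).comp ((tendsto_add_atTop_nat c).congr fun k => add_comm k c)
  simpa [hstep] using hasSum_sub_succ_of_antitone hanti hlim

end

theorem stmt9_general (κ : ℕ) (q : ℝ) (hq0 : 0 < q) (hq1 : q < 1)
    (a : ℕ) (ha1 : 1 ≤ a) (lam : ℕ) (hlam : 1 ≤ lam) :
    ∑' k : ℕ, xi κ q a (lam + k)
      = q ^ (lam+a-1) * (1-q) * (1 - q ^ a) * (1 - q ^ (κ+1-a)) /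
        ((1 - q ^ (κ+1)) * (1 - q ^ (lam+a-1)) * (1 - q ^ (lam+a))) := by
  set c := lam + a - 1
  set C := (1 - q ^ a) * (1 - q ^ (κ + 1 - a)) / (1 - q ^ (κ + 1))
  have hxi (k : ℕ) : xi κ q a (lam + k) = C * (q ^ (c + k) * (1 - q) ^ 2 * (1 + q ^ (c + k + 1))
      / ((1 - q ^ (c + k)) * (1 - q ^ (c + k + 1)) * (1 - q ^ (c + k + 2)))) := by
    rw [xi, show lam + k + a - 1 = c + k by omega, show lam + k + a = c + k + 1 by omega,
      show c + k + 1 + 1 = c + k + 2 by omega]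
    -- otherwise `ring` treats the inverse of each whole denominator as one atom
    simp only [div_eq_mul_inv, mul_inv]
    ring
  rw [tsum_congr hxi, ((hasSum_pow_mul_one_sub_sq_div hq0.le hq1 (by omega)).mul_left C).tsum_eq,
    show c + 1 = lam + a by omega]
  simp only [C, div_eq_mul_inv, mul_inv]
  ring

theorem stmt9 (κ : ℕ) (hκ : 1 ≤ κ) (q : ℝ) (hq0 : 0 < q) (hq1 : q < 1)
    (a : ℕ) (ha1 : 1 ≤ a) (ha2 : a ≤ κ) (lam : ℕ) (hlam : 1 ≤ lam) :
    ∑' k : ℕ, xi κ q a (lam + k)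
      = q ^ (lam+a-1) * (1-q) * (1 - q ^ a) * (1 - q ^ (κ+1-a)) /
        ((1 - q ^ (κ+1)) * (1 - q ^ (lam+a-1)) * (1 - q ^ (lam+a))) :=
  stmt9_general κ q hq0 hq1 a ha1 lam hlam
end

section
/- Let $G(\mathbf{m})$ denote the number of lattice paths from the origin to $\mathbf{m} = (m_1,\dots,m_r) \in \mathbb{N}_0^r$ with unit steps in the coordinate directions that stay within the Weyl chamber $W_r = \{(x_1,\dots,x_r) \in \mathbb{N}_0^r : x_1 \ge x_2 \ge \cdots \ge x_r\}$. Then for $\mathbf{m} \in W_r$, $G(\mathbf{m}) = (m_1+\cdots+m_r)!\, \frac{\prod_{1 \le i < j \le r}(m_i - m_j + j - i)}{(m_1+r-1)!\,(m_2+r-2)! \cdots m_r!}$. -/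
/-!
Put `ℓ i = m i + (r - 1 - i)` and `Δ ℓ = ∏_{i<j} (ℓ i - ℓ j)`. Splitting off the last step shows
that the number `G m` of paths satisfies `G m = ∑ i, G (m - e i)`, where `G` vanishes off the Weyl
chamber. The right-hand side `N! Δ ℓ / ∏ i, (ℓ i)!` obeys the same recursion, by the identity
`∑ i, ℓ i * Δ (ℓ - e i) = (∑ i, ℓ i - ∑_{j<r} j) * Δ ℓ` and because, when `m - e i` leaves the
chamber, either `ℓ i = 0` or `ℓ i - 1 = ℓ (i + 1)`. Up to sign `Δ` is a Vandermonde determinant,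
and the identity is best seen in the basis of falling factorials.
-/

/-- Number of steps among the first `k` steps of `s` that go in direction `i`;
the `i`-th coordinate of the lattice path after `k` steps. -/
def steps {N r : ℕ} (s : Fin N → Fin r) (k : ℕ) (i : Fin r) : ℕ :=
  (Finset.univ.filter (fun j : Fin N => (j:ℕ) < k ∧ s j = i)).card

open Finset Matrix Polynomial
open scoped Nat

namespace Matrix

variable {R : Type*} [CommRing R] {n : Type*} [Fintype n] [DecidableEq n]

theorem sum_det_updateRow_eq_sum_det_updateCol (M K : Matrix n n R) :
    ∑ i, (M.updateRow i (K i)).det = ∑ j, (M.updateCol j fun i => K i j).det := by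
  have hrow : ∀ i v, (M.updateRow i v).det = ∑ j, v j * M.adjugate j i := by
    intro i v
    rw [← cramer_transpose_apply, cramer_eq_adjugate_mulVec, ← adjugate_transpose]
    simp [mulVec, dotProduct, mul_comm]
  have hcol : ∀ j w, (M.updateCol j w).det = ∑ i, M.adjugate j i * w i := by
    intro j w
    rw [← cramer_apply, cramer_eq_adjugate_mulVec]
    rfl
  simp_rw [hrow, hcol]
  rw [Finset.sum_comm]
  simp_rw [mul_comm]

end Matrix

variable {R : Type*} [CommRing R] {r : ℕ}

noncomputable def fallingVandermonde (x : Fin r → R) : Matrix (Fin r) (Fin r) R :=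
  of fun k j => (descPochhammer R j).eval (x k)

theorem det_fallingVandermonde [IsDomain R] (x : Fin r → R) :
    (fallingVandermonde x).det = (vandermonde x).det :=
  (det_eval_matrixOfPolynomials_eq_det_vandermonde x _ (fun j => descPochhammer_natDegree R j)
    (fun j => monic_descPochhammer R j)).symm

/- Start from `(∑ i, x i) * det F`, `F = fallingVandermonde x`: scale row `i` by `x i` and sum
over `i`, then move the scaling to the columns, where `x * (x)_j = (x)_{j+1} + j * (x)_j`, and back
to the rows, where `x * (x - 1)_j = (x)_{j+1}`. -/
theorem sum_mul_det_fallingVandermonde_sub_single (x : Fin r → R) :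
    ∑ i, x i * (fallingVandermonde (x - Pi.single i 1)).det
      = (∑ i, x i - ∑ j : Fin r, ((j : ℕ) : R)) * (fallingVandermonde x).det := by
  set F := fallingVandermonde x
  set G : Matrix (Fin r) (Fin r) R := of fun k j => (descPochhammer R (j + 1)).eval (x k)
  have hrow : ∀ i, (F.updateRow i (x i • F i)).det = x i * F.det := fun i => by
    rw [det_updateRow_smul, updateRow_eq_self]
  have hcol : ∀ j : Fin r, (F.updateCol j fun k => x k * F k j).det
      = (F.updateCol j fun k => G k j).det + ((j : ℕ) : R) * F.det := fun j => by
    have : (fun k => x k * F k j) = (fun k => G k j) + ((j : ℕ) : R) • fun k => F k j := by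
      ext k
      simp only [F, G, fallingVandermonde, of_apply, descPochhammer_succ_eval, Pi.add_apply,
        Pi.smul_apply, smul_eq_mul]
      ring
    rw [this, det_updateCol_add, det_updateCol_smul, updateCol_eq_self]
  have hshift : ∀ i, x i * (fallingVandermonde (x - Pi.single i 1)).det
      = (F.updateRow i (G i)).det := fun i => by
    have : fallingVandermonde (x - Pi.single i 1)
        = F.updateRow i fun j => (descPochhammer R j).eval (x i - 1) := by
      ext k j
      by_cases hk : k = i
      · subst hk; simp [fallingVandermonde]
      · simp [F, fallingVandermonde, hk]
    rw [this, ← det_updateRow_smul]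
    congr 2
    ext j
    simp [G, descPochhammer_succ_left]
  have key : (∑ i, x i) * F.det = ∑ i, x i * (fallingVandermonde (x - Pi.single i 1)).det
      + (∑ j : Fin r, ((j : ℕ) : R)) * F.det :=
    calc (∑ i, x i) * F.det = ∑ i, (F.updateRow i (x i • F i)).det := by
          simp_rw [sum_mul, hrow]
      _ = ∑ j, (F.updateCol j fun k => x k * F k j).det :=
          sum_det_updateRow_eq_sum_det_updateCol F fun i j => x i * F i j
      _ = _ := by
          simp_rw [hcol, hshift]
          rw [sum_add_distrib, ← sum_mul, sum_det_updateRow_eq_sum_det_updateCol]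
  linear_combination -key

def vandermondeProd (x : Fin r → R) : R := ∏ i, ∏ j ∈ Ioi i, (x i - x j)

theorem vandermondeProd_eq_mul_det (x : Fin r → R) :
    vandermondeProd x = (∏ i : Fin r, ∏ _j ∈ Ioi i, (-1 : R)) * (vandermonde x).det := by
  rw [det_vandermonde, vandermondeProd, ← prod_mul_distrib]
  refine prod_congr rfl fun i _ => ?_
  rw [← prod_mul_distrib]
  exact prod_congr rfl fun j _ => by ring

theorem vandermondeProd_eq_zero {x : Fin r → R} {i j : Fin r} (hij : i < j) (hx : x i = x j) :
    vandermondeProd x = 0 :=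
  prod_eq_zero (mem_univ i) (prod_eq_zero (mem_Ioi.2 hij) (sub_eq_zero.2 hx))

theorem sum_mul_vandermondeProd_sub_single [IsDomain R] (x : Fin r → R) :
    ∑ i, x i * vandermondeProd (x - Pi.single i 1)
      = (∑ i, x i - ∑ j : Fin r, ((j : ℕ) : R)) * vandermondeProd x := by
  simp_rw [vandermondeProd_eq_mul_det, ← det_fallingVandermonde,
    mul_left_comm _ (∏ i : Fin r, ∏ _j ∈ Ioi i, (-1 : R)), ← mul_sum,
    sum_mul_det_fallingVandermonde_sub_single]

section Paths

variable {N : ℕ}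

theorem steps_snoc_of_le (s : Fin N → Fin r) (i : Fin r) {k : ℕ} (hk : k ≤ N) :
    steps (Fin.snoc s i : Fin (N + 1) → Fin r) k = steps s k := by
  ext j
  simp only [steps, card_filter, Fin.sum_univ_castSucc, Fin.snoc_castSucc, Fin.val_castSucc,
    Fin.snoc_last, Fin.val_last]
  simp [show ¬N < k by omega]

theorem steps_snoc (s : Fin N → Fin r) (i : Fin r) :
    steps (Fin.snoc s i : Fin (N + 1) → Fin r) (N + 1) = steps s N + Pi.single i 1 := by
  ext j
  simp only [steps, card_filter, Fin.sum_univ_castSucc, Fin.snoc_castSucc, Fin.val_castSucc,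
    Fin.snoc_last, Fin.val_last, Pi.add_apply, Pi.single_apply]
  simp [eq_comm]

theorem sum_steps (s : Fin N → Fin r) : ∑ i, steps s N i = N := by
  simp only [steps, Fin.is_lt, true_and]
  rw [← card_eq_sum_card_fiberwise (fun j _ => mem_univ (s j)), card_univ, Fintype.card_fin]

theorem single_one_le {ι : Type*} [DecidableEq ι] {m : ι → ℕ} {i : ι} (hmi : m i ≠ 0) :
    Pi.single i 1 ≤ m := by
  intro j
  by_cases hj : j = i
  · subst hj; simp; omega
  · simp [hj]

theorem sub_single_one_of_eq_zero {ι : Type*} [DecidableEq ι] {m : ι → ℕ} {i : ι}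
    (hmi : m i = 0) : m - Pi.single i 1 = m := by
  ext j
  by_cases hj : j = i
  · subst hj; simp [hmi]
  · simp [hj]

theorem sum_sub_single_one_add_one {ι : Type*} [Fintype ι] [DecidableEq ι] {m : ι → ℕ} {i : ι}
    (hmi : m i ≠ 0) : ∑ j, (m - Pi.single i 1 : ι → ℕ) j + 1 = ∑ j, m j := by
  conv_rhs => rw [← tsub_add_cancel_of_le (single_one_le hmi)]
  simp [sum_add_distrib]

def ballotPaths (N : ℕ) (m : Fin r → ℕ) : Set (Fin N → Fin r) :=
  {s | (∀ i, steps s N i = m i) ∧ ∀ k ≤ N, Antitone (steps s k)}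

theorem ballotPaths_eq_empty_of_sum_ne {m : Fin r → ℕ} (h : ∑ i, m i ≠ N) :
    ballotPaths N m = ∅ :=
  Set.eq_empty_of_forall_notMem fun s hs => h <| by rw [← funext hs.1, sum_steps]

theorem ballotPaths_eq_empty_of_not_antitone {m : Fin r → ℕ} (h : ¬Antitone m) :
    ballotPaths N m = ∅ :=
  Set.eq_empty_of_forall_notMem fun _ hs => h <| funext hs.1 ▸ hs.2 N le_rfl

theorem ballotPaths_zero : ballotPaths 0 (0 : Fin r → ℕ) = Set.univ := by
  have hsteps (s : Fin 0 → Fin r) (k : ℕ) : steps s k = 0 := by ext; simp [steps]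
  ext s
  simp only [ballotPaths, hsteps, Set.mem_ofPred_eq, Set.mem_univ, iff_true]
  exact ⟨fun _ => trivial, fun _ _ _ _ _ => le_rfl⟩

theorem snoc_mem_ballotPaths_iff {m : Fin r → ℕ} (hm : Antitone m) (hsum : ∑ i, m i = N + 1)
    (s : Fin N → Fin r) (i : Fin r) :
    (Fin.snoc s i : Fin (N + 1) → Fin r) ∈ ballotPaths (N + 1) m
      ↔ s ∈ ballotPaths N (m - Pi.single i 1) := by
  simp only [ballotPaths, Set.mem_ofPred_eq, ← funext_iff, steps_snoc]
  constructor
  · rintro ⟨hend, hprefix⟩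
    refine ⟨eq_tsub_of_add_eq hend, fun k hk => ?_⟩
    simpa only [← steps_snoc_of_le s i hk] using hprefix k (by omega)
  · rintro ⟨hend, hprefix⟩
    have hmi : m i ≠ 0 := by
      intro hmi
      have := sum_steps s
      rw [hend, sub_single_one_of_eq_zero hmi] at this
      omega
    have hend' : steps s N + Pi.single i 1 = m := by
      rw [hend, tsub_add_cancel_of_le (single_one_le hmi)]
    refine ⟨hend', fun k hk => ?_⟩
    rcases Nat.lt_or_eq_of_le hk with hk | rfl
    · simpa only [steps_snoc_of_le s i (Nat.le_of_lt_succ hk)] using hprefix k (by omega)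
    · rwa [steps_snoc, hend']

def ballotPathsSnocEquiv {m : Fin r → ℕ} (hm : Antitone m) (hsum : ∑ i, m i = N + 1) :
    ballotPaths (N + 1) m ≃ Σ i, ballotPaths N (m - Pi.single i 1) where
  toFun s := ⟨s.1 (Fin.last N), Fin.init s.1,
    (snoc_mem_ballotPaths_iff hm hsum _ _).1 (by simpa only [Fin.snoc_init_self] using s.2)⟩
  invFun p := ⟨Fin.snoc p.2.1 p.1, (snoc_mem_ballotPaths_iff hm hsum _ _).2 p.2.2⟩
  left_inv s := Subtype.ext (Fin.snoc_init_self s.1)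
  right_inv p := Sigma.subtype_ext (by simp) (by simp)

theorem card_ballotPaths_succ {m : Fin r → ℕ} (hm : Antitone m) (hsum : ∑ i, m i = N + 1) :
    Nat.card (ballotPaths (N + 1) m) = ∑ i, Nat.card (ballotPaths N (m - Pi.single i 1)) := by
  rw [Nat.card_congr (ballotPathsSnocEquiv hm hsum), Nat.card_sigma]

end Paths

section Formula

def shiftedParts (m : Fin r → ℕ) (i : Fin r) : ℕ := m i + (r - 1 - i)

theorem cast_shiftedParts_sub_single {m : Fin r → ℕ} {i : Fin r} (hmi : m i ≠ 0) :
    (fun j => (shiftedParts (m - Pi.single i 1) j : ℚ))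
      = (fun j => (shiftedParts m j : ℚ)) - Pi.single i 1 := by
  ext j
  by_cases hj : j = i
  · subst hj
    simp only [shiftedParts, Pi.sub_apply, Pi.single_eq_same]
    push_cast [Nat.one_le_iff_ne_zero.2 hmi]
    ring
  · simp [shiftedParts, hj]

theorem prod_factorial_shiftedParts {m : Fin r → ℕ} {i : Fin r} (hmi : m i ≠ 0) :
    ∏ j, (shiftedParts m j)!
      = shiftedParts m i * ∏ j, (shiftedParts (m - Pi.single i 1) j)! := by
  rw [← mul_prod_erase univ _ (mem_univ i)]
  conv_rhs => rw [← mul_prod_erase univ _ (mem_univ i), ← mul_assoc]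
  congr 1
  · simp only [shiftedParts, Pi.sub_apply, Pi.single_eq_same]
    rw [show m i - 1 + (r - 1 - i) = m i + (r - 1 - i) - 1 by omega,
      Nat.mul_factorial_pred (by omega)]
  · exact prod_congr rfl fun j hj => by simp [shiftedParts, ne_of_mem_erase hj]

theorem antitone_sub_single_one {m : Fin r → ℕ} (hm : Antitone m) {i : Fin r}
    (hlt : ∀ j, i < j → m j < m i) : Antitone (m - Pi.single i 1) := by
  intro a b hab
  have := hm hab
  simp only [Pi.sub_apply, Pi.single_apply]
  split_ifs with hb ha ha
  · omega
  · omega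
  · subst ha
    have := hlt b (lt_of_le_of_ne hab (Ne.symm hb))
    omega
  · omega

theorem shiftedParts_eq_zero_or_exists_eq {m : Fin r → ℕ} (hm : Antitone m) {i : Fin r}
    (h : ¬(m i ≠ 0 ∧ Antitone (m - Pi.single i 1))) :
    shiftedParts m i = 0 ∨ ∃ j, i < j ∧ m j = m i := by
  by_contra! hc
  obtain ⟨hℓ, hne⟩ := hc
  have hlt : ∀ j, i < j → m j < m i := fun j hij => lt_of_le_of_ne (hm hij.le) (hne j hij)
  refine h ⟨fun hmi => ?_, antitone_sub_single_one hm hlt⟩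
  have hi : (i : ℕ) + 1 < r := by simp only [shiftedParts, hmi] at hℓ; omega
  exact absurd (hlt ⟨i + 1, hi⟩ (Fin.lt_def.2 (Nat.lt_succ_self _))) (by omega)

theorem vandermondeProd_shiftedParts_sub_single_eq_zero {m : Fin r → ℕ} (hm : Antitone m)
    {i j : Fin r} (hij : i < j) (h : m j = m i) :
    vandermondeProd ((fun k => (shiftedParts m k : ℚ)) - Pi.single i 1) = 0 := by
  have hk : (i : ℕ) + 1 < r := by have := j.isLt; rw [Fin.lt_def] at hij; omega
  have hik : i < ⟨i + 1, hk⟩ := Fin.lt_def.2 (Nat.lt_succ_self _)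
  have hmk : m ⟨i + 1, hk⟩ = m i :=
    le_antisymm (hm hik.le) (h ▸ hm (Fin.le_def.2 (by rw [Fin.lt_def] at hij; simpa using hij)))
  refine vandermondeProd_eq_zero hik ?_
  have : shiftedParts m i = shiftedParts m ⟨i + 1, hk⟩ + 1 := by
    simp only [shiftedParts, hmk]; omega
  simp [hik.ne', this]

theorem card_ballotPaths_sub_single_mul {N : ℕ} (ih : ∀ {m' : Fin r → ℕ}, Antitone m' →
      ∑ i, m' i = N → ((Nat.card (ballotPaths N m') * ∏ i, (shiftedParts m' i)! : ℕ) : ℚ)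
        = N ! * vandermondeProd (fun i => (shiftedParts m' i : ℚ)))
    {m : Fin r → ℕ} (hm : Antitone m) (hsum : ∑ i, m i = N + 1) (i : Fin r) :
    ((Nat.card (ballotPaths N (m - Pi.single i 1)) * ∏ j, (shiftedParts m j)! : ℕ) : ℚ)
      = N ! * (shiftedParts m i * vandermondeProd ((fun j => (shiftedParts m j : ℚ))
        - Pi.single i 1)) := by
  by_cases hgood : m i ≠ 0 ∧ Antitone (m - Pi.single i 1)
  · obtain ⟨hmi, hanti⟩ := hgood
    have hsum' : ∑ j, (m - Pi.single i 1 : Fin r → ℕ) j = N := by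
      have := sum_sub_single_one_add_one hmi; omega
    have := ih hanti hsum'
    rw [prod_factorial_shiftedParts hmi, ← cast_shiftedParts_sub_single hmi]
    push_cast at this ⊢
    linear_combination (shiftedParts m i : ℚ) * this
  · have hempty : ballotPaths N (m - Pi.single i 1) = ∅ := by
      rcases not_and_or.1 hgood with hmi | hanti
      · rw [sub_single_one_of_eq_zero (not_not.1 hmi)]
        exact ballotPaths_eq_empty_of_sum_ne (by omega)
      · exact ballotPaths_eq_empty_of_not_antitone hanti
    rw [hempty, Nat.card_of_isEmpty, zero_mul, Nat.cast_zero]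
    rcases shiftedParts_eq_zero_or_exists_eq hm hgood with h0 | ⟨j, hij, hj⟩
    · simp [h0]
    · simp [vandermondeProd_shiftedParts_sub_single_eq_zero hm hij hj]

theorem sum_shiftedParts {m : Fin r → ℕ} :
    ∑ i, (shiftedParts m i : ℚ) = ∑ i, (m i : ℚ) + ∑ i : Fin r, ((i : ℕ) : ℚ) := by
  rw [← Equiv.sum_comp Fin.revPerm (fun i : Fin r => ((i : ℕ) : ℚ)), ← sum_add_distrib]
  refine sum_congr rfl fun i _ => ?_
  simp only [shiftedParts, Fin.revPerm_apply, Fin.val_rev]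
  push_cast [show r - 1 - (i : ℕ) = r - (i + 1) by omega]
  rfl

theorem vandermondeProd_staircase :
    vandermondeProd (fun i : Fin r => ((r - 1 - i : ℕ) : ℚ))
      = ∏ i : Fin r, ((r - 1 - i)! : ℚ) := by
  refine prod_congr rfl fun i _ => ?_
  have hdiff (j : Fin r) (hj : j ∈ Ioi i) :
      ((r - 1 - i : ℕ) : ℚ) - ((r - 1 - j : ℕ) : ℚ) = ((j - i : ℕ) : ℚ) := by
    have := Fin.lt_def.1 (mem_Ioi.1 hj)
    have := j.isLt
    rw [← Nat.cast_sub (by omega)]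
    congr 1
    omega
  rw [prod_congr rfl hdiff, ← Nat.cast_prod]
  congr 1
  have hmap := prod_map (Ioi i) Fin.valEmbedding (fun j => j - (i : ℕ))
  simp only [Fin.valEmbedding_apply] at hmap
  rw [← hmap, Fin.map_valEmbedding_Ioi, ← Ico_add_one_left_eq_Ioo, prod_Ico_eq_prod_range,
    ← prod_range_add_one_eq_factorial]
  exact prod_congr (by congr 1; omega) fun k _ => by omega

theorem card_ballotPaths_mul_prod_factorial {N : ℕ} {m : Fin r → ℕ} (hm : Antitone m)
    (hsum : ∑ i, m i = N) :
    ((Nat.card (ballotPaths N m) * ∏ i, (shiftedParts m i)! : ℕ) : ℚ)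
      = N ! * vandermondeProd (fun i => (shiftedParts m i : ℚ)) := by
  induction N generalizing m with
  | zero =>
    obtain rfl : m = 0 := funext fun i => sum_eq_zero_iff.1 hsum i (mem_univ i)
    simp [ballotPaths_zero, shiftedParts, vandermondeProd_staircase]
  | succ N ih =>
    have hsum' : ∑ i, (shiftedParts m i : ℚ) - ∑ i : Fin r, ((i : ℕ) : ℚ) = N + 1 := by
      rw [sum_shiftedParts, add_sub_cancel_right]
      exact_mod_cast hsum
    calc ((Nat.card (ballotPaths (N + 1) m) * ∏ i, (shiftedParts m i)! : ℕ) : ℚ)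
        = ∑ i, ((Nat.card (ballotPaths N (m - Pi.single i 1))
            * ∏ j, (shiftedParts m j)! : ℕ) : ℚ) := by
          rw [card_ballotPaths_succ hm hsum, sum_mul, Nat.cast_sum]
      _ = ∑ i, (N ! : ℚ) * (shiftedParts m i
            * vandermondeProd ((fun j => (shiftedParts m j : ℚ)) - Pi.single i 1)) :=
          sum_congr rfl fun i _ => card_ballotPaths_sub_single_mul ih hm hsum i
      _ = ((N + 1)! : ℚ) * vandermondeProd (fun i => (shiftedParts m i : ℚ)) := by
          rw [← mul_sum, sum_mul_vandermondeProd_sub_single, hsum', Nat.factorial_succ]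
          push_cast
          ring

theorem cast_prod_eq_vandermondeProd_shiftedParts {m : Fin r → ℕ} (hm : Antitone m) :
    ((∏ p ∈ univ.filter (fun p : Fin r × Fin r => p.1 < p.2),
        (m p.1 - m p.2 + ((p.2 : ℕ) - (p.1 : ℕ))) : ℕ) : ℚ)
      = vandermondeProd (fun i => (shiftedParts m i : ℚ)) := by
  rw [prod_finset_product _ univ (fun i => Ioi i) (by simp), vandermondeProd, Nat.cast_prod]
  refine prod_congr rfl fun i _ => ?_
  rw [Nat.cast_prod]
  refine prod_congr rfl fun j hj => ?_
  have hij := mem_Ioi.1 hj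
  have := hm hij.le
  have := Fin.lt_def.1 hij
  have := j.isLt
  rw [eq_sub_iff_add_eq]
  norm_cast
  simp only [shiftedParts]
  omega

end Formula

theorem stmt17_general (r : ℕ) (m : Fin r → ℕ)
    (hm : ∀ i j : Fin r, i ≤ j → m j ≤ m i) :
    Nat.card {s : Fin (∑ i, m i) → Fin r //
        (∀ i : Fin r, steps s (∑ i, m i) i = m i) ∧
        (∀ k : ℕ, k ≤ ∑ i, m i → ∀ i j : Fin r, i ≤ j → steps s k j ≤ steps s k i)} *
      ∏ i : Fin r, Nat.factorial (m i + (r - 1 - (i:ℕ)))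
    = Nat.factorial (∑ i, m i) *
      ∏ p ∈ Finset.univ.filter (fun p : Fin r × Fin r => p.1 < p.2),
        (m p.1 - m p.2 + ((p.2 : ℕ) - (p.1 : ℕ))) := by
  have key := card_ballotPaths_mul_prod_factorial hm rfl
  rw [← cast_prod_eq_vandermondeProd_shiftedParts hm] at key
  exact_mod_cast key

theorem stmt17 (r : ℕ) (hr : 1 ≤ r) (m : Fin r → ℕ)
    (hm : ∀ i j : Fin r, i ≤ j → m j ≤ m i) :
    Nat.card {s : Fin (∑ i, m i) → Fin r //
        (∀ i : Fin r, steps s (∑ i, m i) i = m i) ∧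
        (∀ k : ℕ, k ≤ ∑ i, m i → ∀ i j : Fin r, i ≤ j → steps s k j ≤ steps s k i)} *
      ∏ i : Fin r, Nat.factorial (m i + (r - 1 - (i:ℕ)))
    = Nat.factorial (∑ i, m i) *
      ∏ p ∈ Finset.univ.filter (fun p : Fin r × Fin r => p.1 < p.2),
        (m p.1 - m p.2 + ((p.2 : ℕ) - (p.1 : ℕ))) :=
  stmt17_general r m hm
end
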